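/- Let (C, w, l, r, d) be homological data of an oriented knot diagram D on Σ_g and let c₁, c₂, c₃ ∈ C be the three crossings involved in a third Reidemeister move. (i) If w(c₁) = w(c₂) = 1, w(c₃) = −1 and r(c₁) + r(c₂) + r(c₃) = d (the relation [D_{c₁}^r] + [D_{c₂}^r] + [D_{c₃}^r] = [D] of the first configuration of Figure 5), then for every γ ∈ ℤ^{2g} with ω(γ, d) = 0 one has f_γ(c₃) = f_γ(c₁) + f_γ(c₂). (ii) If w(c₁) = 1, w(c₂) = −1, w(c₃) = 1 and r(c₁) + d = r(c₂) + r(c₃) (the relation [D_{c₁}^r] + [D] = [D_{c₂}^r] + [D_{c₃}^r] of the second configuration), then again f_γ(c₃) = f_γ(c₁) + f_γ(c₂). In particular, in either case the three indices f_γ(c₁), f_γ(c₂), f_γ(c₃) cannot all be odd integers, so no parity derived from H₁(Σ, ℤ₂) makes all three crossings of a third Reidemeister move odd. -/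

import Mathlib

/-- The standard alternating intersection form on `ℤ^{2g} ≅ H₁(Σ_g, ℤ)`. -/
def intersectionForm (g : ℕ) (x y : Fin (2 * g) → ℤ) : ℤ :=
  ∑ i : Fin g,
    (x ⟨2 * i.val, by omega⟩ * y ⟨2 * i.val + 1, by omega⟩
      - x ⟨2 * i.val + 1, by omega⟩ * y ⟨2 * i.val, by omega⟩)

/-- The chord index `f_γ(c) = w(c)·ω(γ, r(c))`. -/
def chordIndex (g : ℕ) {Cr : Type*} (w : Cr → ℤ) (r : Cr → Fin (2 * g) → ℤ)
    (γ : Fin (2 * g) → ℤ) (c : Cr) : ℤ :=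
  w c * intersectionForm g γ (r c)

lemma intersectionForm_add_right (g : ℕ) (x a b : Fin (2 * g) → ℤ) :
    intersectionForm g x (a + b) = intersectionForm g x a + intersectionForm g x b := by
  simp only [intersectionForm, Pi.add_apply, ← Finset.sum_add_distrib]
  exact Finset.sum_congr rfl fun i _ => by ring

lemma Int.not_odd_all_of_eq_add {a b c : ℤ} (h : c = a + b) : ¬(Odd a ∧ Odd b ∧ Odd c) := by
  rintro ⟨ha, hb, hc⟩
  exact Int.not_even_iff_odd.2 hc (h ▸ ha.add_odd hb)

section ChordIndex

variable {g : ℕ} {Cr : Type*} {w : Cr → ℤ} {r : Cr → Fin (2 * g) → ℤ} {d γ : Fin (2 * g) → ℤ}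
  {c₁ c₂ c₃ : Cr}

theorem chordIndex_eq_add_of_first_configuration (h₁ : w c₁ = 1) (h₂ : w c₂ = 1)
    (h₃ : w c₃ = -1) (hr : r c₁ + r c₂ + r c₃ = d) (hγ : intersectionForm g γ d = 0) :
    chordIndex g w r γ c₃ = chordIndex g w r γ c₁ + chordIndex g w r γ c₂ := by
  have hω := congrArg (intersectionForm g γ) hr
  rw [intersectionForm_add_right, intersectionForm_add_right, hγ] at hω
  simp only [chordIndex, h₁, h₂, h₃]
  linarith

theorem chordIndex_eq_add_of_second_configuration (h₁ : w c₁ = 1) (h₂ : w c₂ = -1)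
    (h₃ : w c₃ = 1) (hr : r c₁ + d = r c₂ + r c₃) (hγ : intersectionForm g γ d = 0) :
    chordIndex g w r γ c₃ = chordIndex g w r γ c₁ + chordIndex g w r γ c₂ := by
  have hω := congrArg (intersectionForm g γ) hr
  rw [intersectionForm_add_right, intersectionForm_add_right, hγ] at hω
  simp only [chordIndex, h₁, h₂, h₃]
  linarith

end ChordIndex

theorem third_reidemeister_index_relation_general (g : ℕ) (Cr : Type*)
    (w : Cr → ℤ) (r : Cr → Fin (2 * g) → ℤ) (d : Fin (2 * g) → ℤ)
    (c₁ c₂ c₃ : Cr) :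
    ((w c₁ = 1 → w c₂ = 1 → w c₃ = -1 → r c₁ + r c₂ + r c₃ = d →
      ∀ γ : Fin (2 * g) → ℤ, intersectionForm g γ d = 0 →
        chordIndex g w r γ c₃ = chordIndex g w r γ c₁ + chordIndex g w r γ c₂) ∧
     (w c₁ = 1 → w c₂ = -1 → w c₃ = 1 → r c₁ + d = r c₂ + r c₃ →
      ∀ γ : Fin (2 * g) → ℤ, intersectionForm g γ d = 0 →
        chordIndex g w r γ c₃ = chordIndex g w r γ c₁ + chordIndex g w r γ c₂)) ∧
    (∀ γ : Fin (2 * g) → ℤ, intersectionForm g γ d = 0 →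
      chordIndex g w r γ c₃ = chordIndex g w r γ c₁ + chordIndex g w r γ c₂ →
      ¬(Odd (chordIndex g w r γ c₁) ∧ Odd (chordIndex g w r γ c₂) ∧
        Odd (chordIndex g w r γ c₃))) :=
  ⟨⟨fun h₁ h₂ h₃ hr _ hγ => chordIndex_eq_add_of_first_configuration h₁ h₂ h₃ hr hγ,
    fun h₁ h₂ h₃ hr _ hγ => chordIndex_eq_add_of_second_configuration h₁ h₂ h₃ hr hγ⟩,
   fun _ _ => Int.not_odd_all_of_eq_add⟩

/-- The relation `f_γ(c₃) = f_γ(c₁) + f_γ(c₂)` for the three crossings of a third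
Reidemeister move (Section 4, Figure 5): in the first configuration
(`w(c₁) = w(c₂) = 1`, `w(c₃) = -1`, `[D_{c₁}^r] + [D_{c₂}^r] + [D_{c₃}^r] = [D]`) and in
the second configuration (`w(c₁) = 1`, `w(c₂) = -1`, `w(c₃) = 1`,
`[D_{c₁}^r] + [D] = [D_{c₂}^r] + [D_{c₃}^r]`); in particular `f_γ(c₁), f_γ(c₂), f_γ(c₃)`
cannot all be odd, so no homological parity makes all three crossings odd. -/
theorem third_reidemeister_index_relation (g : ℕ) (Cr : Type*) [Fintype Cr]
    (w : Cr → ℤ) (l r : Cr → Fin (2 * g) → ℤ) (d : Fin (2 * g) → ℤ)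
    (hw : ∀ c, w c = 1 ∨ w c = -1)
    (hlr : ∀ c, l c + r c = d)
    (c₁ c₂ c₃ : Cr) :
    ((w c₁ = 1 → w c₂ = 1 → w c₃ = -1 → r c₁ + r c₂ + r c₃ = d →
      ∀ γ : Fin (2 * g) → ℤ, intersectionForm g γ d = 0 →
        chordIndex g w r γ c₃ = chordIndex g w r γ c₁ + chordIndex g w r γ c₂) ∧
     (w c₁ = 1 → w c₂ = -1 → w c₃ = 1 → r c₁ + d = r c₂ + r c₃ →
      ∀ γ : Fin (2 * g) → ℤ, intersectionForm g γ d = 0 →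
        chordIndex g w r γ c₃ = chordIndex g w r γ c₁ + chordIndex g w r γ c₂)) ∧
    (∀ γ : Fin (2 * g) → ℤ, intersectionForm g γ d = 0 →
      chordIndex g w r γ c₃ = chordIndex g w r γ c₁ + chordIndex g w r γ c₂ →
      ¬(Odd (chordIndex g w r γ c₁) ∧ Odd (chordIndex g w r γ c₂) ∧
        Odd (chordIndex g w r γ c₃))) :=
  third_reidemeister_index_relation_general g Cr w r d c₁ c₂ c₃
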